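/- Assume n ≥ 3. Then for all pairwise distinct j, k, ℓ ∈ {1,…,n}, every smooth F : ℂⁿ → ℂ, and every p ∈ S: p_j·(X_{kℓ}F)(p) + p_k·(X_{ℓj}F)(p) + p_ℓ·(X_{jk}F)(p) = 0; that is, z_j·X_{kℓ} + z_k·X_{ℓj} + z_ℓ·X_{jk} = 0 as vector fields along S. -/

import Mathlib

open Complex

/-- Wirtinger derivative ∂F/∂z_j at p. -/
noncomputable def wirtZ {n : ℕ} (F : (Fin n → ℂ) → ℂ) (p : Fin n → ℂ) (j : Fin n) : ℂ :=
  (1/2) * (fderiv ℝ F p (Pi.single j 1) - I * fderiv ℝ F p (Pi.single j I))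

/-- Wirtinger derivative ∂F/∂z̄_j at p. -/
noncomputable def wirtZbar {n : ℕ} (F : (Fin n → ℂ) → ℂ) (p : Fin n → ℂ) (j : Fin n) : ℂ :=
  (1/2) * (fderiv ℝ F p (Pi.single j 1) + I * fderiv ℝ F p (Pi.single j I))

/-- The projective dual coordinates w_j(z) = (∂ρ/∂z_j)/(Σ_k z_k ∂ρ/∂z_k). -/
noncomputable def wC {n : ℕ} (ρ : (Fin n → ℂ) → ℝ) (z : Fin n → ℂ) (j : Fin n) : ℂ :=
  wirtZ (fun q => (ρ q : ℂ)) z j / ∑ k, z k * wirtZ (fun q => (ρ q : ℂ)) z k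

/-- The operator X_{jk} F = Σ_m b^{jk}_m ∂F/∂z̄_m. -/
noncomputable def XopN {n : ℕ} (b : Fin n → Fin n → (Fin n → ℂ) → Fin n → ℂ) (j k : Fin n)
    (F : (Fin n → ℂ) → ℂ) (p : Fin n → ℂ) : ℂ :=
  ∑ m, b j k p m * wirtZbar F p m

/-!
Fix `p ∈ S`, write `a = ∂ρ(p)`, `σ = Σ pₘ aₘ`, `H = (∂²ρ/∂z̄ᵢ∂zₘ)(p)` (Hermitian because `ρ` is real)
and `⟨u, v⟩ = Σ uₘ v̄ₘ`. By the quotient rule, `σ² Σᵢ βᵢ ∂w/∂z̄ᵢ(p) = L β := σ βH - (βHp) a`, so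
the hypotheses say `⟨b^{xy}(p), a⟩ = 0` and `L b^{xy}(p) = σ² (p_y e_x - p_x e_y)`. For
`c = p_j b^{kℓ}(p) + p_k b^{ℓj}(p) + p_ℓ b^{jk}(p)` the right-hand sides cancel cyclically, so
`L c = 0` and `⟨c, a⟩ = 0`. Since `H` is Hermitian, these give `⟨c, L β⟩ = 0` whenever
`⟨β, a⟩ = 0`, hence `⟨c, p_y e_x - p_x e_y⟩ = 0` for all `x, y`: `c` is a multiple of `p̄`, and
`⟨c, a⟩ = 0` with `σ ≠ 0` forces `c = 0`. The vector field in question is `Σₘ cₘ ∂/∂z̄ₘ`.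
-/

section Wirtinger

variable {n : ℕ} {F f g : (Fin n → ℂ) → ℂ} {p : Fin n → ℂ}

lemma star_wirtZ (j : Fin n) :
    star (wirtZ F p j) = wirtZbar (fun z => star (F z)) p j := by
  simp only [wirtZ, wirtZbar, fderiv_star]
  simp

lemma star_wirtZbar (j : Fin n) :
    star (wirtZbar F p j) = wirtZ (fun z => star (F z)) p j := by
  simp only [wirtZ, wirtZbar, fderiv_star]
  simp
  ring

lemma wirtZbar_ofReal (ρ : (Fin n → ℂ) → ℝ) (j : Fin n) :
    wirtZbar (fun z => (ρ z : ℂ)) p j = star (wirtZ (fun z => (ρ z : ℂ)) p j) := by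
  simp [star_wirtZ]

lemma differentiableAt_wirtZ (hF : DifferentiableAt ℝ (fderiv ℝ F) p) (j : Fin n) :
    DifferentiableAt ℝ (fun z => wirtZ F z j) p := by
  unfold wirtZ
  fun_prop

lemma wirtZ_wirtZbar_comm (hF : ContDiffAt ℝ 2 F p) (i m : Fin n) :
    wirtZ (fun z => wirtZbar F z m) p i = wirtZbar (fun z => wirtZ F z i) p m := by
  have hdiff : DifferentiableAt ℝ (fderiv ℝ F) p :=
    (hF.fderiv_right (m := 1) le_rfl).differentiableAt one_ne_zero
  have hsymm : IsSymmSndFDerivAt ℝ F p := hF.isSymmSndFDerivAt (by simp)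
  have hdiff_apply : ∀ v, DifferentiableAt ℝ (fun z => fderiv ℝ F z v) p :=
    fun v => hdiff.clm_apply (differentiableAt_const v)
  have hsnd : ∀ u v, fderiv ℝ (fun z => fderiv ℝ F z v) p u = fderiv ℝ (fderiv ℝ F) p u v := by
    intro u v
    simp [fderiv_clm_apply hdiff (differentiableAt_const v)]
  simp (disch := fun_prop) only [wirtZ, wirtZbar, fderiv_const_mul, fderiv_fun_add,
    fderiv_fun_sub, smul_apply, add_apply, sub_apply, smul_eq_mul, hsnd]
  rw [hsymm (Pi.single m 1) (Pi.single i 1), hsymm (Pi.single m I) (Pi.single i 1),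
    hsymm (Pi.single m 1) (Pi.single i I), hsymm (Pi.single m I) (Pi.single i I)]
  ring

lemma wirtZbar_mul (hf : DifferentiableAt ℝ f p) (hg : DifferentiableAt ℝ g p) (j : Fin n) :
    wirtZbar (fun z => f z * g z) p j = wirtZbar f p j * g p + f p * wirtZbar g p j := by
  simp only [wirtZbar, fderiv_fun_mul hf hg, add_apply, smul_apply, smul_eq_mul]
  ring

lemma wirtZbar_inv (hf : DifferentiableAt ℝ f p) (hf0 : f p ≠ 0) (j : Fin n) :
    wirtZbar (fun z => (f z)⁻¹) p j = -wirtZbar f p j / f p ^ 2 := by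
  have hcomp : fderiv ℝ (fun z => (f z)⁻¹) p = fderiv ℝ Inv.inv (f p) ∘L fderiv ℝ f p :=
    fderiv_comp p (differentiableAt_inv hf0) hf
  simp only [wirtZbar, hcomp, fderiv_inv' hf0, ContinuousLinearMap.comp_apply, neg_apply,
    ContinuousLinearMap.mulLeftRight_apply]
  field_simp
  ring

lemma wirtZbar_div (hf : DifferentiableAt ℝ f p) (hg : DifferentiableAt ℝ g p) (hg0 : g p ≠ 0)
    (j : Fin n) :
    wirtZbar (fun z => f z / g z) p j
      = (wirtZbar f p j * g p - f p * wirtZbar g p j) / g p ^ 2 := by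
  simp only [div_eq_mul_inv, wirtZbar_mul hf (hg.fun_inv hg0), wirtZbar_inv hg hg0]
  field_simp
  ring

lemma wirtZbar_sum {ι : Type*} (s : Finset ι) {u : ι → (Fin n → ℂ) → ℂ}
    (hu : ∀ k ∈ s, DifferentiableAt ℝ (u k) p) (j : Fin n) :
    wirtZbar (fun z => ∑ k ∈ s, u k z) p j = ∑ k ∈ s, wirtZbar (u k) p j := by
  simp only [wirtZbar, fderiv_fun_sum hu, sum_apply, Finset.mul_sum,
    ← Finset.sum_add_distrib]

lemma wirtZbar_coord_eq_zero (k j : Fin n) : wirtZbar (fun z : Fin n → ℂ => z k) p j = 0 := by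
  rcases eq_or_ne k j with rfl | hkj <;> simp [wirtZbar, (hasFDerivAt_apply k p).fderiv, *]

lemma wirtZbar_dotProduct {G : (Fin n → ℂ) → Fin n → ℂ}
    (hG : ∀ k, DifferentiableAt ℝ (fun z => G z k) p) (j : Fin n) :
    wirtZbar (fun z => z ⬝ᵥ G z) p j = p ⬝ᵥ fun k => wirtZbar (fun z => G z k) p j := by
  have hcoord : ∀ k, DifferentiableAt ℝ (fun z : Fin n → ℂ => z k) p := fun k => by fun_prop
  simp only [dotProduct]
  rw [wirtZbar_sum _ fun k _ => (hcoord k).fun_mul (hG k)]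
  refine Finset.sum_congr rfl fun k _ => ?_
  rw [wirtZbar_mul (hcoord k) (hG k), wirtZbar_coord_eq_zero, zero_mul, zero_add]

end Wirtinger

open Matrix

lemma cyclic_smul_single_sub_single {ι R : Type*} [DecidableEq ι] [CommRing R] (p : ι → R)
    (j k ℓ : ι) :
    p j • (Pi.single k (p ℓ) - Pi.single ℓ (p k) : ι → R)
      + p k • (Pi.single ℓ (p j) - Pi.single j (p ℓ))
      + p ℓ • (Pi.single j (p k) - Pi.single k (p j)) = 0 := by
  funext m
  simp only [Pi.add_apply, Pi.smul_apply, Pi.sub_apply, Pi.single_apply, smul_eq_mul,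
    Pi.zero_apply]
  split_ifs <;> ring

section ScaledDualDeriv

variable {ι : Type*} [Fintype ι]

/-- At a point `p` with `a = ∂ρ(p)` and `H = (∂²ρ/∂z̄ᵢ∂zₘ)(p)`, this is `(Σ pₘ aₘ)²` times the
derivative `Σᵢ βᵢ ∂w/∂z̄ᵢ` of the dual coordinates `w = ∂ρ / ⟨z, ∂ρ⟩` (see `XopN_wC`). -/
def scaledDualDeriv (H : Matrix ι ι ℂ) (a p : ι → ℂ) : (ι → ℂ) →ₗ[ℂ] ι → ℂ where
  toFun β := (p ⬝ᵥ a) • (β ᵥ* H) - (β ⬝ᵥ H *ᵥ p) • a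
  map_add' β γ := by simp only [add_vecMul, add_dotProduct, smul_add, add_smul]; abel
  map_smul' c β := by
    simp only [smul_vecMul, smul_dotProduct, smul_eq_mul, RingHom.id_apply, mul_smul, smul_sub]
    rw [smul_comm]

variable {H : Matrix ι ι ℂ} {a p : ι → ℂ}

lemma dotProduct_star_scaledDualDeriv_eq_zero (hH : H.IsHermitian) {c β : ι → ℂ}
    (hc_tan : c ⬝ᵥ star a = 0) (hc : scaledDualDeriv H a p c = 0)
    (hβ_tan : β ⬝ᵥ star a = 0) : c ⬝ᵥ star (scaledDualDeriv H a p β) = 0 := by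
  have hcH : (p ⬝ᵥ a) • (c ᵥ* H) = (c ⬝ᵥ H *ᵥ p) • a := sub_eq_zero.mp hc
  have hpair : (p ⬝ᵥ a) * (c ᵥ* H ⬝ᵥ star β) = 0 := by
    rw [← smul_eq_mul, ← smul_dotProduct, hcH, smul_dotProduct, dotProduct_comm,
      dotProduct_star, hβ_tan, star_zero, smul_zero]
  have hpair_star : star (p ⬝ᵥ a) * (c ᵥ* H ⬝ᵥ star β) = 0 := by
    rcases mul_eq_zero.mp hpair with h | h <;> simp [h]
  simpa only [scaledDualDeriv, LinearMap.coe_mk, AddHom.coe_mk, star_sub, star_smul,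
    dotProduct_sub, dotProduct_smul, hc_tan, mul_zero, sub_zero, star_vecMul, hH.eq,
    dotProduct_mulVec, smul_eq_mul] using hpair_star

lemma eq_zero_of_mul_star_comm {c : ι → ℂ} (hσ : p ⬝ᵥ a ≠ 0) (hc_tan : c ⬝ᵥ star a = 0)
    (h : ∀ x y, c x * star (p y) = c y * star (p x)) : c = 0 := by
  obtain ⟨k, hk⟩ : ∃ k, p k ≠ 0 := by
    by_contra! hp
    exact hσ (by simp [dotProduct, hp])
  have hck_mul : c k * star (p ⬝ᵥ a) = 0 := by
    calc c k * star (p ⬝ᵥ a) = star (p k) * (c ⬝ᵥ star a) := by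
          simp only [dotProduct, star_sum, star_mul', Finset.mul_sum]
          refine Finset.sum_congr rfl fun m _ => ?_
          linear_combination star (a m) * h k m
      _ = 0 := by rw [hc_tan, mul_zero]
  have hck : c k = 0 := by simpa [hσ] using hck_mul
  funext m
  simpa [hck, hk] using h m k

theorem cyclic_sum_eq_zero_of_scaledDualDeriv [DecidableEq ι] (hH : H.IsHermitian)
    (hσ : p ⬝ᵥ a ≠ 0) (β : ι → ι → ι → ℂ) (hβ_tan : ∀ x y, x ≠ y → β x y ⬝ᵥ star a = 0)
    (hβ : ∀ x y, x ≠ y →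
      scaledDualDeriv H a p (β x y) = (p ⬝ᵥ a) ^ 2 • (Pi.single x (p y) - Pi.single y (p x)))
    {j k ℓ : ι} (hjk : j ≠ k) (hjℓ : j ≠ ℓ) (hkℓ : k ≠ ℓ) :
    p j • β k ℓ + p k • β ℓ j + p ℓ • β j k = 0 := by
  set c := p j • β k ℓ + p k • β ℓ j + p ℓ • β j k
  have hc_tan : c ⬝ᵥ star a = 0 := by
    simp [c, add_dotProduct, hβ_tan, hjk, hjℓ.symm, hkℓ]
  have hc : scaledDualDeriv H a p c = 0 := by
    simp only [c, map_add, map_smul, hβ _ _ hjk, hβ _ _ hjℓ.symm, hβ _ _ hkℓ, smul_comm (p _)]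
    rw [← smul_add, ← smul_add, cyclic_smul_single_sub_single, smul_zero]
  refine eq_zero_of_mul_star_comm hσ hc_tan fun x y => ?_
  rcases eq_or_ne x y with rfl | hxy
  · rfl
  have h := dotProduct_star_scaledDualDeriv_eq_zero hH hc_tan hc (hβ_tan x y hxy)
  simpa [hβ x y hxy, dotProduct_sub, hσ, sub_eq_zero] using h

end ScaledDualDeriv

section DefiningFunction

variable {n : ℕ} {ρ : (Fin n → ℂ) → ℝ}

noncomputable def wirtGrad (ρ : (Fin n → ℂ) → ℝ) (p : Fin n → ℂ) : Fin n → ℂ :=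
  wirtZ (fun q => (ρ q : ℂ)) p

noncomputable def complexHessian (ρ : (Fin n → ℂ) → ℝ) (p : Fin n → ℂ) :
    Matrix (Fin n) (Fin n) ℂ :=
  Matrix.of fun i m => wirtZbar (fun z => wirtGrad ρ z m) p i

lemma contDiff_ofReal_comp (hρ : ContDiff ℝ 2 ρ) : ContDiff ℝ 2 (fun q => (ρ q : ℂ)) :=
  ofRealCLM.contDiff.comp hρ

lemma differentiableAt_wirtGrad (hρ : ContDiff ℝ 2 ρ) (p : Fin n → ℂ) (m : Fin n) :
    DifferentiableAt ℝ (fun z => wirtGrad ρ z m) p :=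
  differentiableAt_wirtZ
    (((contDiff_ofReal_comp hρ).fderiv_right (m := 1) le_rfl).differentiable one_ne_zero p) m

lemma isHermitian_complexHessian (hρ : ContDiff ℝ 2 ρ) (p : Fin n → ℂ) :
    (complexHessian ρ p).IsHermitian := by
  ext i m
  have hconj :
      (fun z => star (wirtGrad ρ z i)) = fun z => wirtZbar (fun q => (ρ q : ℂ)) z i := by
    funext z
    rw [wirtZbar_ofReal, wirtGrad]
  simp only [conjTranspose_apply, complexHessian, of_apply, star_wirtZbar, hconj]
  exact wirtZ_wirtZbar_comm (contDiff_ofReal_comp hρ).contDiffAt m i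

lemma wirtZbar_wC (hρ : ContDiff ℝ 2 ρ) {p : Fin n → ℂ} (hσ : p ⬝ᵥ wirtGrad ρ p ≠ 0)
    (i m : Fin n) :
    wirtZbar (fun z => wC ρ z m) p i
      = ((p ⬝ᵥ wirtGrad ρ p) * complexHessian ρ p i m
          - wirtGrad ρ p m * (complexHessian ρ p *ᵥ p) i) / (p ⬝ᵥ wirtGrad ρ p) ^ 2 := by
  have hgrad := differentiableAt_wirtGrad hρ p
  have hσd : DifferentiableAt ℝ (fun z => z ⬝ᵥ wirtGrad ρ z) p := by
    simp only [dotProduct]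
    fun_prop
  have hquot := wirtZbar_div (hgrad m) hσd hσ i
  rw [wirtZbar_dotProduct hgrad] at hquot
  rw [show (fun z => wC ρ z m) = fun z => wirtGrad ρ z m / (z ⬝ᵥ wirtGrad ρ z) from rfl, hquot]
  simp only [complexHessian, mulVec, dotProduct_comm p, of_apply]
  ring

lemma XopN_wC (hρ : ContDiff ℝ 2 ρ) {p : Fin n → ℂ} (hσ : p ⬝ᵥ wirtGrad ρ p ≠ 0)
    (b : Fin n → Fin n → (Fin n → ℂ) → Fin n → ℂ) (x y m : Fin n) :
    XopN b x y (fun z => wC ρ z m) p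
      = scaledDualDeriv (complexHessian ρ p) (wirtGrad ρ p) p (b x y p) m
          / (p ⬝ᵥ wirtGrad ρ p) ^ 2 := by
  simp only [XopN, wirtZbar_wC hρ hσ, mul_div_assoc', ← Finset.sum_div]
  congr 1
  simp only [scaledDualDeriv, LinearMap.coe_mk, AddHom.coe_mk, Pi.sub_apply, Pi.smul_apply,
    smul_eq_mul]
  set σ := p ⬝ᵥ wirtGrad ρ p
  simp only [vecMul, dotProduct, Finset.mul_sum, Finset.sum_mul, ← Finset.sum_sub_distrib]
  refine Finset.sum_congr rfl fun i _ => ?_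
  ring

lemma scaledDualDeriv_eq_of_XopN_wC (hρ : ContDiff ℝ 2 ρ) {p : Fin n → ℂ}
    (hσ : p ⬝ᵥ wirtGrad ρ p ≠ 0) (b : Fin n → Fin n → (Fin n → ℂ) → Fin n → ℂ) {x y : Fin n}
    (hxy : x ≠ y) (hx : XopN b x y (fun z => wC ρ z x) p = p y)
    (hy : XopN b x y (fun z => wC ρ z y) p = -p x)
    (hm : ∀ m, m ≠ x → m ≠ y → XopN b x y (fun z => wC ρ z m) p = 0) :
    scaledDualDeriv (complexHessian ρ p) (wirtGrad ρ p) p (b x y p)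
      = (p ⬝ᵥ wirtGrad ρ p) ^ 2 • (Pi.single x (p y) - Pi.single y (p x)) := by
  funext m
  have h := XopN_wC hρ hσ b x y m
  rw [eq_div_iff (pow_ne_zero 2 hσ)] at h
  rw [← h, mul_comm]
  rcases eq_or_ne m x with rfl | hmx
  · simp [hx, hxy]
  rcases eq_or_ne m y with rfl | hmy
  · simp [hy, hmx]
  · simp [hm m hmx hmy, hmx, hmy]

end DefiningFunction

theorem X_field_relation
    {n : ℕ}
    (ρ : (Fin n → ℂ) → ℝ) (hρ : ContDiff ℝ (⊤ : ℕ∞) ρ)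
    (S : Set (Fin n → ℂ))
    (hsum : ∀ p ∈ S, (∑ k, p k * wirtZ (fun q => (ρ q : ℂ)) p k) ≠ 0)
    (b : Fin n → Fin n → (Fin n → ℂ) → Fin n → ℂ)
    (hbtan : ∀ j k, j ≠ k → ∀ p ∈ S, (∑ m, b j k p m * wirtZbar (fun q => (ρ q : ℂ)) p m) = 0)
    (hXwj : ∀ j k, j ≠ k → ∀ p ∈ S, XopN b j k (fun z => wC ρ z j) p = p k)
    (hXwk : ∀ j k, j ≠ k → ∀ p ∈ S, XopN b j k (fun z => wC ρ z k) p = -(p j))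
    (hXwm : ∀ j k, j ≠ k → ∀ m, m ≠ j → m ≠ k → ∀ p ∈ S, XopN b j k (fun z => wC ρ z m) p = 0) :
    ∀ j k ℓ : Fin n, j ≠ k → j ≠ ℓ → k ≠ ℓ →
      ∀ F : (Fin n → ℂ) → ℂ, ContDiff ℝ (⊤ : ℕ∞) F →
      ∀ p ∈ S,
        p j * XopN b k ℓ F p + p k * XopN b ℓ j F p + p ℓ * XopN b j k F p = 0 := by
  intro j k ℓ hjk hjℓ hkℓ F _ p hp
  have hρ2 : ContDiff ℝ 2 ρ := hρ.of_le (WithTop.coe_le_coe.mpr le_top)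
  have hσ : p ⬝ᵥ wirtGrad ρ p ≠ 0 := hsum p hp
  have hβ_tan : ∀ x y, x ≠ y → b x y p ⬝ᵥ star (wirtGrad ρ p) = 0 := fun x y hxy => by
    simpa [dotProduct, wirtGrad, wirtZbar_ofReal] using hbtan x y hxy p hp
  have hc := cyclic_sum_eq_zero_of_scaledDualDeriv (isHermitian_complexHessian hρ2 p) hσ
    (fun x y => b x y p) hβ_tan
    (fun x y hxy => scaledDualDeriv_eq_of_XopN_wC hρ2 hσ b hxy (hXwj x y hxy p hp)
      (hXwk x y hxy p hp) (fun m hmx hmy => hXwm x y hxy m hmx hmy p hp)) hjk hjℓ hkℓ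
  calc p j * XopN b k ℓ F p + p k * XopN b ℓ j F p + p ℓ * XopN b j k F p
      = (p j • b k ℓ p + p k • b ℓ j p + p ℓ • b j k p) ⬝ᵥ fun m => wirtZbar F p m := by
        simp only [XopN, dotProduct, Pi.add_apply, Pi.smul_apply, smul_eq_mul, add_mul,
          Finset.sum_add_distrib, Finset.mul_sum, mul_assoc]
    _ = 0 := by rw [hc, zero_dotProduct]
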